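/- Consider the probability distribution on (w_1, w_2, w_3, z) ∈ {-1,1}³ × {-1,1} given by P(w_1, w_2, w_3, z) = (1/Z) exp( θ_1 w_1 + θ_z z + θ_{1z} w_1 z + θ_{2z} w_2 z + θ_{3z} w_3 z ), where Z is the normalizing constant and θ_1, θ_z, θ_{1z}, θ_{2z}, θ_{3z} are real parameters. Define the agreement variables a_j := w_j z. Then a_1 is independent of a_2, and a_1 is independent of a_3: P(a_1 = α, a_2 = β) = P(a_1 = α) P(a_2 = β) and P(a_1 = α, a_3 = β) = P(a_1 = α) P(a_3 = β) for all α, β ∈ {-1,1}. -/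

import Mathlib

open Finset Real

attribute [local instance] Classical.propDecidable

/-- Encoding of a spin `{-1,1}` value by a Boolean: `true ↦ 1`, `false ↦ -1`. -/
noncomputable def spin (b : Bool) : ℝ := if b then 1 else -1

/-- Unnormalized density `exp(θ₁ w₁ + θ_z z + θ₁z w₁ z + θ₂z w₂ z + θ₃z w₃ z)` on
`(w₁, w₂, w₃, z) ∈ {-1,1}³ × {-1,1}`. -/
noncomputable def ising3Weight (θ₁ θz θ1z θ2z θ3z : ℝ)
    (x : Bool × Bool × Bool × Bool) : ℝ :=
  Real.exp (θ₁ * spin x.1 + θz * spin x.2.2.2 + θ1z * spin x.1 * spin x.2.2.2 +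
    θ2z * spin x.2.1 * spin x.2.2.2 + θ3z * spin x.2.2.1 * spin x.2.2.2)

/-- Probability mass function of the three-candidate Ising model with a unary
potential on the first candidate. -/
noncomputable def ising3P (θ₁ θz θ1z θ2z θ3z : ℝ)
    (x : Bool × Bool × Bool × Bool) : ℝ :=
  ising3Weight θ₁ θz θ1z θ2z θ3z x /
    ∑ y : Bool × Bool × Bool × Bool, ising3Weight θ₁ θz θ1z θ2z θ3z y

/-- Probability of an event under the three-candidate Ising model. -/
noncomputable def ising3Pr (θ₁ θz θ1z θ2z θ3z : ℝ)
    (E : Bool × Bool × Bool × Bool → Prop) : ℝ :=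
  ∑ x : Bool × Bool × Bool × Bool, if E x then ising3P θ₁ θz θ1z θ2z θ3z x else 0

/-! In the agreement coordinates `a_j = w_j z` the unary term becomes `θ₁ w₁ = θ₁ a₁ z`, so the
weight factorizes as `f(a₁, z) · g(a₂, a₃)`. Under a product weight the two factors are
independent, and `a₁` is a function of the first factor while `a₂`, `a₃` are functions of the
second. -/

section ProductWeight

variable {Ω X Y : Type*} [Fintype Ω] [Fintype X] [Fintype Y]

theorem sum_ite_and_mul_sum_eq_of_factorization (e : Ω ≃ X × Y) {W : Ω → ℝ} {f : X → ℝ}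
    {g : Y → ℝ} (hW : ∀ ω, W ω = f (e ω).1 * g (e ω).2) (E₁ : X → Prop) (E₂ : Y → Prop) :
    (∑ ω, if E₁ (e ω).1 ∧ E₂ (e ω).2 then W ω else 0) * ∑ ω, W ω =
      (∑ ω, if E₁ (e ω).1 then W ω else 0) * ∑ ω, if E₂ (e ω).2 then W ω else 0 := by
  have hprod (P : X → Prop) (Q : Y → Prop) :
      (∑ ω, if P (e ω).1 ∧ Q (e ω).2 then W ω else 0) =
        (∑ x, if P x then f x else 0) * ∑ y, if Q y then g y else 0 := by
    let F (p : X × Y) : ℝ := if P p.1 ∧ Q p.2 then f p.1 * g p.2 else 0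
    calc (∑ ω, if P (e ω).1 ∧ Q (e ω).2 then W ω else 0) = ∑ ω, F (e ω) := by simp only [hW, F]
      _ = ∑ p, F p := e.sum_comp F
      _ = _ := by
        simp only [F, Fintype.sum_prod_type, Finset.sum_mul_sum, ite_zero_mul_ite_zero]
  have hE₁ := hprod E₁ fun _ => True
  have hE₂ := hprod (fun _ => True) E₂
  have hall := hprod (fun _ => True) fun _ => True
  simp only [and_true, true_and, if_true] at hE₁ hE₂ hall
  rw [hprod, hE₁, hE₂, hall]
  ring

end ProductWeight

theorem spin_mul_spin (a b : Bool) : spin a * spin b = spin (a == b) := by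
  cases a <;> cases b <;> norm_num [spin]

theorem spin_mul_self (a : Bool) : spin a * spin a = 1 := by
  cases a <;> norm_num [spin]

/-- `(w₁, w₂, w₃, z) ↦ ((a₁, z), (a₂, a₃))`, with the Boolean agreement `w == z` encoding
`a = w z`. -/
def agreementEquiv : Bool × Bool × Bool × Bool ≃ (Bool × Bool) × (Bool × Bool) where
  toFun x := ((x.1 == x.2.2.2, x.2.2.2), (x.2.1 == x.2.2.2, x.2.2.1 == x.2.2.2))
  invFun p := (p.1.1 == p.1.2, p.2.1 == p.1.2, p.2.2 == p.1.2, p.1.2)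
  left_inv := by decide
  right_inv := by decide

noncomputable def ising3WeightLeft (θ₁ θz θ1z : ℝ) (p : Bool × Bool) : ℝ :=
  exp (θ₁ * spin p.1 * spin p.2 + θz * spin p.2 + θ1z * spin p.1)

noncomputable def ising3WeightRight (θ2z θ3z : ℝ) (q : Bool × Bool) : ℝ :=
  exp (θ2z * spin q.1 + θ3z * spin q.2)

theorem ising3Weight_eq_mul (θ₁ θz θ1z θ2z θ3z : ℝ) (x : Bool × Bool × Bool × Bool) :
    ising3Weight θ₁ θz θ1z θ2z θ3z x =
      ising3WeightLeft θ₁ θz θ1z (agreementEquiv x).1 *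
        ising3WeightRight θ2z θ3z (agreementEquiv x).2 := by
  obtain ⟨w₁, w₂, w₃, z⟩ := x
  simp only [ising3Weight, ising3WeightLeft, ising3WeightRight, agreementEquiv,
    Equiv.coe_fn_mk, ← spin_mul_spin, ← exp_add]
  congr 1
  linear_combination -(θ₁ * spin w₁) * spin_mul_self z

theorem ising3Pr_eq_div (θ₁ θz θ1z θ2z θ3z : ℝ) (E : Bool × Bool × Bool × Bool → Prop) :
    ising3Pr θ₁ θz θ1z θ2z θ3z E =
      (∑ x, if E x then ising3Weight θ₁ θz θ1z θ2z θ3z x else 0) /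
        ∑ x, ising3Weight θ₁ θz θ1z θ2z θ3z x := by
  simp only [ising3Pr, ising3P, Finset.sum_div]
  exact Finset.sum_congr rfl fun x _ => by split_ifs <;> simp

theorem ising3Pr_agreementEquiv_indep (θ₁ θz θ1z θ2z θ3z : ℝ) (E₁ E₂ : Bool × Bool → Prop) :
    ising3Pr θ₁ θz θ1z θ2z θ3z (fun x => E₁ (agreementEquiv x).1 ∧ E₂ (agreementEquiv x).2) =
      ising3Pr θ₁ θz θ1z θ2z θ3z (fun x => E₁ (agreementEquiv x).1) *
        ising3Pr θ₁ θz θ1z θ2z θ3z (fun x => E₂ (agreementEquiv x).2) := by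
  have hZ : ∑ x, ising3Weight θ₁ θz θ1z θ2z θ3z x ≠ 0 :=
    (Finset.sum_pos (fun _ _ => exp_pos _) Finset.univ_nonempty).ne'
  have h := sum_ite_and_mul_sum_eq_of_factorization agreementEquiv
    (ising3Weight_eq_mul θ₁ θz θ1z θ2z θ3z) E₁ E₂
  rw [ising3Pr_eq_div, ising3Pr_eq_div, ising3Pr_eq_div, div_mul_div_comm, ← h,
    mul_div_mul_right _ _ hZ]
  -- the two sides differ only in the `Decidable` instance of the conjunction
  congr!

theorem ising3_agreements_independent_general (θ₁ θz θ1z θ2z θ3z : ℝ)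
    (α β : ℝ) :
    (ising3Pr θ₁ θz θ1z θ2z θ3z
        (fun x => spin x.1 * spin x.2.2.2 = α ∧ spin x.2.1 * spin x.2.2.2 = β) =
      ising3Pr θ₁ θz θ1z θ2z θ3z (fun x => spin x.1 * spin x.2.2.2 = α) *
        ising3Pr θ₁ θz θ1z θ2z θ3z (fun x => spin x.2.1 * spin x.2.2.2 = β)) ∧
    (ising3Pr θ₁ θz θ1z θ2z θ3z
        (fun x => spin x.1 * spin x.2.2.2 = α ∧ spin x.2.2.1 * spin x.2.2.2 = β) =
      ising3Pr θ₁ θz θ1z θ2z θ3z (fun x => spin x.1 * spin x.2.2.2 = α) *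
        ising3Pr θ₁ θz θ1z θ2z θ3z (fun x => spin x.2.2.1 * spin x.2.2.2 = β)) := by
  simp only [spin_mul_spin]
  have indep := ising3Pr_agreementEquiv_indep θ₁ θz θ1z θ2z θ3z fun p => spin p.1 = α
  exact ⟨indep fun q => spin q.1 = β, indep fun q => spin q.2 = β⟩

/-- **Independence of agreement variables with a unary potential.**
In the model `P(w₁,w₂,w₃,z) ∝ exp(θ₁w₁ + θ_z z + θ₁z w₁z + θ₂z w₂z + θ₃z w₃z)`,
the agreement variables `a_j := w_j z` satisfy: `a₁` is independent of `a₂`, and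
`a₁` is independent of `a₃`. -/
theorem ising3_agreements_independent (θ₁ θz θ1z θ2z θ3z : ℝ)
    (α β : ℝ) (hα : α = 1 ∨ α = -1) (hβ : β = 1 ∨ β = -1) :
    (ising3Pr θ₁ θz θ1z θ2z θ3z
        (fun x => spin x.1 * spin x.2.2.2 = α ∧ spin x.2.1 * spin x.2.2.2 = β) =
      ising3Pr θ₁ θz θ1z θ2z θ3z (fun x => spin x.1 * spin x.2.2.2 = α) *
        ising3Pr θ₁ θz θ1z θ2z θ3z (fun x => spin x.2.1 * spin x.2.2.2 = β)) ∧
    (ising3Pr θ₁ θz θ1z θ2z θ3z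
        (fun x => spin x.1 * spin x.2.2.2 = α ∧ spin x.2.2.1 * spin x.2.2.2 = β) =
      ising3Pr θ₁ θz θ1z θ2z θ3z (fun x => spin x.1 * spin x.2.2.2 = α) *
        ising3Pr θ₁ θz θ1z θ2z θ3z (fun x => spin x.2.2.1 * spin x.2.2.2 = β)) :=
  ising3_agreements_independent_general θ₁ θz θ1z θ2z θ3z α β
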